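/- The independence number of G equals M = s^{k(d−1)}: for each t ∈ T the M many t-blocks of 𝓑 form an independent set, and any M+1 blocks of 𝓑 contain two blocks with nonempty intersection (since each block of 𝓑 has volume m = s^k and all blocks lie in [0,m]^d, which has volume m^d = m·M). -/

import Mathlib

/-!
A `t`-block with `∑ t i = k` contains exactly `s ^ k` integer points, and a block of `𝓑` lies in
`[0, s^k)^d`, which contains `(s ^ k) ^ d` of them. So pairwise disjoint blocks of `𝓑` number at
most `(s ^ k) ^ d / s ^ k = s ^ (k * (d - 1))`. Conversely, for fixed `t` the `t`-blocks of `𝓑` tile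
`[0, s^k)^d`, and there are `∏ i, s ^ (k - t i) = s ^ (k * (d - 1))` of them.
-/

open scoped Classical

noncomputable section

/-- The `t`-block `B_t(p) = ∏_i [s^{t i}·p i, s^{t i}·(p i + 1))`. -/
def block (d s : ℕ) (t : Fin d → ℕ) (p : Fin d → ℤ) : Set (Fin d → ℝ) :=
  Set.univ.pi fun i =>
    Set.Ico ((s : ℝ) ^ t i * (p i : ℝ)) ((s : ℝ) ^ t i * ((p i : ℝ) + 1))

/-- The family `𝓑` of all `t`-blocks with `∑ t i = k` contained in `[0, s^k]^d`. -/
def blockFamily (d s k : ℕ) : Set (Set (Fin d → ℝ)) :=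
  {B | ∃ t : Fin d → ℕ, ∃ p : Fin d → ℤ, (∑ i, t i) = k ∧
    (∀ i, 0 ≤ p i ∧ p i < (s : ℤ) ^ (k - t i)) ∧ B = block d s t p}

open Finset Fintype

lemma Int.card_Ico_add_natCast (a : ℤ) (n : ℕ) : #(Ico a (a + n)) = n := by
  simp [Int.card_Ico]

namespace Block

variable {d s : ℕ}

def lattice (s : ℕ) (t : Fin d → ℕ) (p : Fin d → ℤ) : Finset (Fin d → ℤ) :=
  piFinset fun i => Ico ((s : ℤ) ^ t i * p i) ((s : ℤ) ^ t i * p i + (s ^ t i : ℕ))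

def cube (d n : ℕ) : Finset (Fin d → ℤ) :=
  piFinset fun _ => Ico 0 (n : ℤ)

lemma card_lattice (t : Fin d → ℕ) (p : Fin d → ℤ) : #(lattice s t p) = s ^ ∑ i, t i := by
  simp only [lattice, card_piFinset, Int.card_Ico_add_natCast, prod_pow_eq_pow_sum]

lemma card_cube (n : ℕ) : #(cube d n) = n ^ d := by
  simp [cube, card_piFinset, Int.card_Ico]

lemma intCast_mem_block_iff {t : Fin d → ℕ} {p q : Fin d → ℤ} :
    (fun i => (q i : ℝ)) ∈ block d s t p ↔ q ∈ lattice s t p := by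
  simp only [block, lattice, Set.mem_univ_pi, Set.mem_Ico, mem_piFinset, mem_Ico]
  refine forall_congr' fun i => and_congr ?_ ?_ <;> norm_cast
  rw [mul_add_one]

lemma lattice_subset_cube {k : ℕ} {t : Fin d → ℕ} {p : Fin d → ℤ} (htk : ∀ i, t i ≤ k)
    (hp : ∀ i, 0 ≤ p i ∧ p i < (s : ℤ) ^ (k - t i)) : lattice s t p ⊆ cube d (s ^ k) := by
  intro q hq
  simp only [lattice, cube, mem_piFinset, mem_Ico] at hq ⊢
  intro i
  have hpow : (s : ℤ) ^ t i * (s : ℤ) ^ (k - t i) = (s : ℤ) ^ k := by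
    rw [← pow_add, Nat.add_sub_cancel' (htk i)]
  have hle : (s : ℤ) ^ t i * (p i + 1) ≤ (s : ℤ) ^ t i * (s : ℤ) ^ (k - t i) :=
    mul_le_mul_of_nonneg_left (hp i).2 (by positivity)
  have hnonneg : 0 ≤ (s : ℤ) ^ t i * p i := mul_nonneg (by positivity) (hp i).1
  push_cast at hq ⊢
  constructor <;> nlinarith [hq i]

lemma floor_div_eq_of_mem_block (hs : 0 < s) {t : Fin d → ℕ} {p : Fin d → ℤ}
    {x : Fin d → ℝ} (hx : x ∈ block d s t p) (i : Fin d) : ⌊x i / (s : ℝ) ^ t i⌋ = p i := by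
  have hpow : (0 : ℝ) < (s : ℝ) ^ t i := by positivity
  obtain ⟨hlo, hhi⟩ := Set.mem_univ_pi.mp hx i
  rw [Int.floor_eq_iff, le_div_iff₀ hpow, div_lt_iff₀ hpow, mul_comm, mul_comm (_ + 1)]
  exact ⟨hlo, hhi⟩

lemma disjoint (hs : 0 < s) (t : Fin d → ℕ) {p q : Fin d → ℤ} (hpq : p ≠ q) :
    Disjoint (block d s t p) (block d s t q) :=
  Set.disjoint_left.mpr fun _ hp hq => hpq <| funext fun i =>
    (floor_div_eq_of_mem_block hs hp i).symm.trans (floor_div_eq_of_mem_block hs hq i)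

lemma nonempty (hs : 0 < s) (t : Fin d → ℕ) (p : Fin d → ℤ) : (block d s t p).Nonempty :=
  ⟨fun i => (((s : ℤ) ^ t i * p i : ℤ) : ℝ), intCast_mem_block_iff.mpr <|
    mem_piFinset.mpr fun i => by simp [hs]⟩

lemma injective (hs : 0 < s) (t : Fin d → ℕ) : Function.Injective (block d s t) := by
  intro p q hpq
  by_contra hne
  have := disjoint hs t hne
  rw [hpq, disjoint_self, Set.bot_eq_empty] at this
  exact (nonempty hs t q).ne_empty this

end Block

open Block

variable {d s k : ℕ}

lemma le_of_sum_eq {t : Fin d → ℕ} (ht : ∑ i, t i = k) (i : Fin d) : t i ≤ k :=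
  ht ▸ single_le_sum (fun _ _ => Nat.zero_le _) (mem_univ i)

lemma sum_tsub_eq_mul_pred {t : Fin d → ℕ} (ht : ∑ i, t i = k) :
    ∑ i, (k - t i) = k * (d - 1) := by
  rw [sum_tsub_distrib _ fun i _ => le_of_sum_eq ht i, ht, sum_const, card_univ,
    Fintype.card_fin, smul_eq_mul, Nat.mul_sub_one, mul_comm]

def blockPositions (s k : ℕ) (t : Fin d → ℕ) : Finset (Fin d → ℤ) :=
  piFinset fun i => Ico 0 ((s : ℤ) ^ (k - t i))

lemma mem_blockPositions {t : Fin d → ℕ} {p : Fin d → ℤ} :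
    p ∈ blockPositions s k t ↔ ∀ i, 0 ≤ p i ∧ p i < (s : ℤ) ^ (k - t i) := by
  simp only [blockPositions, mem_piFinset, mem_Ico]

lemma card_blockPositions {t : Fin d → ℕ} (ht : ∑ i, t i = k) :
    #(blockPositions s k t) = s ^ (k * (d - 1)) := by
  simp only [blockPositions, card_piFinset, Int.card_Ico, sub_zero]
  norm_cast
  simp only [prod_pow_eq_pow_sum, sum_tsub_eq_mul_pred ht]

lemma card_mul_le_of_pairwise_disjoint {S : Finset (Set (Fin d → ℝ))}
    (hS : ↑S ⊆ blockFamily d s k) (hdisj : (↑S : Set (Set (Fin d → ℝ))).Pairwise Disjoint) :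
    #S * s ^ k ≤ (s ^ k) ^ d := by
  let r : Set (Fin d → ℝ) → (Fin d → ℤ) → Prop := fun B q => (fun i => (q i : ℝ)) ∈ B
  have hcount := card_mul_le_card_mul r (s := S) (t := cube d (s ^ k)) (m := s ^ k) (n := 1)
    ?above ?below
  · rwa [card_cube, mul_one] at hcount
  case above =>
    intro B hB
    obtain ⟨t, p, ht, hp, rfl⟩ := hS hB
    calc s ^ k = #(lattice s t p) := by rw [card_lattice, ht]
      _ ≤ _ := card_le_card fun q hq => mem_filter.mpr
          ⟨lattice_subset_cube (le_of_sum_eq ht) hp hq, intCast_mem_block_iff.mpr hq⟩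
  case below =>
    intro q _
    refine card_le_one.mpr fun B hB B' hB' => ?_
    simp only [bipartiteBelow, mem_filter] at hB hB'
    by_contra hne
    exact Set.disjoint_left.mp (hdisj hB.1 hB'.1 hne) hB.2 hB'.2

theorem independence_number_of_blockFamily_general (d s k : ℕ) (hd : 2 ≤ d) (hs : 2 ≤ s) :
    (∀ t : Fin d → ℕ, (∑ i, t i) = k →
      ∃ S : Finset (Set (Fin d → ℝ)),
        S.card = s ^ (k * (d - 1)) ∧
        (∀ B ∈ S, B ∈ blockFamily d s k ∧
          ∃ p : Fin d → ℤ, (∀ i, 0 ≤ p i ∧ p i < (s : ℤ) ^ (k - t i)) ∧ B = block d s t p) ∧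
        ((↑S : Set (Set (Fin d → ℝ))).Pairwise Disjoint)) ∧
    (∀ S : Finset (Set (Fin d → ℝ)), ↑S ⊆ blockFamily d s k →
      (↑S : Set (Set (Fin d → ℝ))).Pairwise Disjoint → S.card ≤ s ^ (k * (d - 1))) := by
  have hs0 : 0 < s := by omega
  refine ⟨fun t ht => ⟨(blockPositions s k t).image (block d s t), ?_, ?_, ?_⟩,
    fun S hS hdisj => ?_⟩
  · rw [card_image_of_injective _ (Block.injective hs0 t), card_blockPositions ht]
  · simp only [mem_image, mem_blockPositions]
    rintro _ ⟨p, hp, rfl⟩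
    exact ⟨⟨t, p, ht, hp, rfl⟩, p, hp, rfl⟩
  · rw [coe_image]
    exact Set.Pairwise.image fun p _ q _ => Block.disjoint hs0 t
  · have hvol : (s ^ k) ^ d = s ^ (k * (d - 1)) * s ^ k := by
      rw [← pow_mul, ← pow_add, Nat.mul_sub_one, Nat.sub_add_cancel (Nat.le_mul_of_pos_right k
        (by omega))]
    have := card_mul_le_of_pairwise_disjoint hS hdisj
    rw [hvol] at this
    exact Nat.le_of_mul_le_mul_right this (by positivity)

/-- The independence number of the intersection graph of `𝓑` equals `M = s^{k(d-1)}`: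
for each `t ∈ T` the `t`-blocks of `𝓑` form a pairwise disjoint subfamily of size `M`,
and every pairwise disjoint subfamily of `𝓑` has at most `M` members. -/
theorem independence_number_of_blockFamily (d s k : ℕ) (hd : 2 ≤ d) (hs : 2 ≤ s)
    (hk : 1 ≤ k) :
    (∀ t : Fin d → ℕ, (∑ i, t i) = k →
      ∃ S : Finset (Set (Fin d → ℝ)),
        S.card = s ^ (k * (d - 1)) ∧
        (∀ B ∈ S, B ∈ blockFamily d s k ∧
          ∃ p : Fin d → ℤ, (∀ i, 0 ≤ p i ∧ p i < (s : ℤ) ^ (k - t i)) ∧ B = block d s t p) ∧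
        ((↑S : Set (Set (Fin d → ℝ))).Pairwise Disjoint)) ∧
    (∀ S : Finset (Set (Fin d → ℝ)), ↑S ⊆ blockFamily d s k →
      (↑S : Set (Set (Fin d → ℝ))).Pairwise Disjoint → S.card ≤ s ^ (k * (d - 1))) :=
  independence_number_of_blockFamily_general d s k hd hs
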